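/- Let G be the graph consisting of an odd cycle C = v_1 ... v_k (k ≥ 5 odd) together with, for each vertex v_i of C, one triangle whose three vertices are all adjacent to v_i, the triangles being pairwise anticomplete and having no other neighbours in C. Then G is not a contact B0-VPG graph. -/

import Mathlib

/-!
At any point of a contact B₀-VPG representation, the segments through it leave in pairwise
distinct axis directions: one for a segment ending there, two for a segment passing through.
As there are only four directions, the four segments of the `K₄` formed by a cycle vertex `vᵢ`
and its triangle meet in an endpoint of the segment `Sᵢ` of `vᵢ` that lies on no other cycle
segment. So `Sᵢ` has a single endpoint left for its two cycle neighbours, and it cannot serve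
both: they would then cross at interior points of both, and a third segment through that
point would need a fifth direction. Counting endpoints around the cycle, every contact of
consecutive segments `Sᵢ`, `Sᵢ₊₁` uses an endpoint of exactly one of them. Parallel touching
segments meet in an endpoint of both, so consecutive cycle segments are perpendicular, and
horizontal and vertical alternate around a cycle of odd length: impossible.
-/

/-- An axis-parallel nontrivial segment on the grid: `horiz` tells its direction,
`coord` is the fixed coordinate (the `y`-coordinate if horizontal, the `x`-coordinate
if vertical) and `[lo, hi]` (with `lo < hi`, i.e. the segment is nontrivial) is the
interval spanned by the varying coordinate. -/
structure GridSeg where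
  horiz : Bool
  coord : ℤ
  lo : ℤ
  hi : ℤ
  lt : lo < hi

namespace GridSeg

/-- The set of points (in the real plane) of a grid segment. -/
def pts (s : GridSeg) : Set (ℝ × ℝ) :=
  if s.horiz then {p | p.2 = (s.coord : ℝ) ∧ (s.lo : ℝ) ≤ p.1 ∧ p.1 ≤ (s.hi : ℝ)}
  else {p | p.1 = (s.coord : ℝ) ∧ (s.lo : ℝ) ≤ p.2 ∧ p.2 ≤ (s.hi : ℝ)}

/-- The interior of a grid segment. -/
def interior (s : GridSeg) : Set (ℝ × ℝ) :=
  if s.horiz then {p | p.2 = (s.coord : ℝ) ∧ (s.lo : ℝ) < p.1 ∧ p.1 < (s.hi : ℝ)}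
  else {p | p.1 = (s.coord : ℝ) ∧ (s.lo : ℝ) < p.2 ∧ p.2 < (s.hi : ℝ)}

/-- The two endpoints of a grid segment. -/
def ends (s : GridSeg) : Set (ℝ × ℝ) :=
  if s.horiz then {((s.lo : ℝ), (s.coord : ℝ)), ((s.hi : ℝ), (s.coord : ℝ))}
  else {((s.coord : ℝ), (s.lo : ℝ)), ((s.coord : ℝ), (s.hi : ℝ))}

/-- Two segments touch if they share a point which is an endpoint of at least
one of the two segments. -/
def Touch (s t : GridSeg) : Prop :=
  ∃ p : ℝ × ℝ, p ∈ s.pts ∧ p ∈ t.pts ∧ (p ∈ s.ends ∨ p ∈ t.ends)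

end GridSeg

/-- `f` is a contact B₀-VPG representation of `G`: the segments of distinct vertices are
interiorly disjoint, and two distinct vertices are adjacent iff their segments touch. -/
def IsB0Rep {V : Type*} (G : SimpleGraph V) (f : V → GridSeg) : Prop :=
  (∀ v w : V, v ≠ w → Disjoint (GridSeg.interior (f v)) (GridSeg.interior (f w))) ∧
  (∀ v w : V, v ≠ w → (G.Adj v w ↔ GridSeg.Touch (f v) (f w)))

/-- A graph is contact B₀-VPG if it admits a contact B₀-VPG representation. -/
def ContactB0VPG {V : Type*} (G : SimpleGraph V) : Prop :=
  ∃ f : V → GridSeg, IsB0Rep G f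

/-- Cyclic shift: the element `i + m (mod k)` of `Fin k`. -/
def cycShift {k : ℕ} (i : Fin k) (m : ℕ) : Fin k :=
  i + ⟨m % k, Nat.mod_lt m (Nat.lt_of_le_of_lt (Nat.zero_le i.1) i.isLt)⟩

/-- `c` lists the vertices of an induced cycle (a hole, when `k ≥ 4`) of `G`, in cyclic
order: `c` is injective and two of its vertices are adjacent iff they are consecutive. -/
def IsInducedCycle {V : Type*} (G : SimpleGraph V) {k : ℕ} (c : Fin k → V) : Prop :=
  Function.Injective c ∧
    ∀ i j : Fin k, G.Adj (c i) (c j) ↔ (i ≠ j ∧ (i = cycShift j 1 ∨ j = cycShift i 1))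

/-- The graph made of a `k`-cycle `v_1 … v_k` together with, for each `i`, `t i` pairwise
anticomplete triangles complete to `v_i` (and anticomplete to the rest of the graph).
Vertices: `Sum.inl i` is the cycle vertex `v_i`; `Sum.inr ⟨i, a, x⟩` is the `x`-th vertex
of the `a`-th triangle attached to `v_i`. -/
def cycleWithTriangles (k : ℕ) (t : Fin k → ℕ) :
    SimpleGraph (Fin k ⊕ Σ i : Fin k, Fin (t i) × Fin 3) where
  Adj a b :=
    match a, b with
    | Sum.inl i, Sum.inl j => i ≠ j ∧ (i = cycShift j 1 ∨ j = cycShift i 1)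
    | Sum.inl i, Sum.inr x => i = x.1
    | Sum.inr x, Sum.inl i => i = x.1
    | Sum.inr x, Sum.inr y => x.1 = y.1 ∧ x.2.1.1 = y.2.1.1 ∧ x.2.2 ≠ y.2.2
  symm := by
    constructor
    rintro (i | x) (j | y) h
    · exact ⟨h.1.symm, h.2.symm⟩
    · exact h
    · exact h
    · exact ⟨h.1.symm, h.2.1.symm, h.2.2.symm⟩
  loopless := by
    constructor
    rintro (i | x) h
    · exact h.1 rfl
    · exact h.2.2 rfl

open Finset Filter Topology

namespace GridSeg

variable {s t u : GridSeg} {p q : ℝ × ℝ} {x y : ℝ}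

/-- `s.point = t.point` says that `s` and `t` lie on the same grid line. -/
def point (s : GridSeg) (x : ℝ) : ℝ × ℝ :=
  if s.horiz then (x, s.coord) else (s.coord, x)

lemma point_injective (s : GridSeg) : Function.Injective s.point := by
  intro x y h
  unfold point at h
  split_ifs at h <;> simp_all

lemma pts_eq_image (s : GridSeg) : s.pts = s.point '' Set.Icc (s.lo : ℝ) s.hi := by
  ext ⟨a, b⟩
  unfold pts point
  split_ifs <;> aesop

lemma interior_eq_image (s : GridSeg) : s.interior = s.point '' Set.Ioo (s.lo : ℝ) s.hi := by
  ext ⟨a, b⟩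
  unfold interior point
  split_ifs <;> aesop

lemma ends_eq_image (s : GridSeg) : s.ends = s.point '' {(s.lo : ℝ), (s.hi : ℝ)} := by
  rw [Set.image_pair]
  unfold ends point
  split_ifs <;> rfl

lemma lo_lt_hi (s : GridSeg) : (s.lo : ℝ) < s.hi := by exact_mod_cast s.lt

lemma mem_pts : p ∈ s.pts ↔ ∃ x, (s.lo : ℝ) ≤ x ∧ x ≤ s.hi ∧ s.point x = p := by
  simp [pts_eq_image, and_assoc]

lemma point_mem_interior : s.point x ∈ s.interior ↔ (s.lo : ℝ) < x ∧ x < s.hi := by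
  rw [interior_eq_image, s.point_injective.mem_set_image, Set.mem_Ioo]

lemma point_mem_ends : s.point x ∈ s.ends ↔ x = s.lo ∨ x = s.hi := by
  rw [ends_eq_image, s.point_injective.mem_set_image]; rfl

lemma ends_subset_pts (s : GridSeg) : s.ends ⊆ s.pts := by
  rw [ends_eq_image, pts_eq_image]
  exact Set.image_mono (Set.pair_subset (Set.left_mem_Icc.2 s.lo_lt_hi.le)
    (Set.right_mem_Icc.2 s.lo_lt_hi.le))

lemma eq_or_eq_of_mem_ends (hp : p ∈ s.ends) (hq : q ∈ s.ends) (hpq : p ≠ q) {r : ℝ × ℝ}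
    (hr : r ∈ s.ends) : r = p ∨ r = q := by
  rw [ends_eq_image, Set.image_pair] at hp hq hr
  simp only [Set.mem_insert_iff, Set.mem_singleton_iff] at hp hq hr
  grind

lemma point_eq_point_of_horiz_eq (h : s.horiz = t.horiz) (hxy : s.point x = t.point y) :
    s.point = t.point := by
  unfold point at hxy ⊢
  rw [h] at hxy ⊢
  split_ifs at hxy ⊢ <;> simp_all

lemma eq_coord_of_horiz_ne (h : s.horiz ≠ t.horiz) (hxy : s.point x = t.point y) :
    x = t.coord := by
  unfold point at hxy
  cases hs : s.horiz <;> cases ht : t.horiz <;> simp_all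

lemma hi_le_lo_or_hi_le_lo (hst : s.point = t.point) (hd : Disjoint s.interior t.interior) :
    (s.hi : ℝ) ≤ t.lo ∨ (t.hi : ℝ) ≤ s.lo := by
  rw [interior_eq_image, interior_eq_image, ← hst,
    Set.disjoint_image_iff s.point_injective, Set.Ioo_disjoint_Ioo] at hd
  by_contra! hc
  rcases min_le_iff.1 hd with h | h <;> rcases le_max_iff.1 h with h' | h' <;>
    linarith [s.lo_lt_hi, t.lo_lt_hi]

lemma exists_param_of_horiz_eq (h : s.horiz = t.horiz) (hs : p ∈ s.pts) (ht : p ∈ t.pts) :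
    s.point = t.point ∧
      ∃ x, (s.lo : ℝ) ≤ x ∧ x ≤ s.hi ∧ (t.lo : ℝ) ≤ x ∧ x ≤ t.hi ∧ s.point x = p := by
  obtain ⟨x, hx, hx', rfl⟩ := mem_pts.1 hs
  obtain ⟨y, hy, hy', hxy⟩ := mem_pts.1 ht
  have hst := point_eq_point_of_horiz_eq h hxy.symm
  obtain rfl : x = y := (t.point_injective (hxy.trans (congrFun hst x))).symm
  exact ⟨hst, x, hx, hx', hy, hy', rfl⟩

lemma eq_of_mem_pts_inter (hd : Disjoint s.interior t.interior) (hps : p ∈ s.pts)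
    (hpt : p ∈ t.pts) (hqs : q ∈ s.pts) (hqt : q ∈ t.pts) : p = q := by
  by_cases h : s.horiz = t.horiz
  · obtain ⟨hst, x, hx₁, hx₂, hx₃, hx₄, rfl⟩ := exists_param_of_horiz_eq h hps hpt
    obtain ⟨-, y, hy₁, hy₂, hy₃, hy₄, rfl⟩ := exists_param_of_horiz_eq h hqs hqt
    congr 1
    rcases hi_le_lo_or_hi_le_lo hst hd with h | h <;> linarith
  · obtain ⟨x, -, -, rfl⟩ := mem_pts.1 hps
    obtain ⟨y, -, -, rfl⟩ := mem_pts.1 hqs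
    obtain ⟨x', -, -, hx⟩ := mem_pts.1 hpt
    obtain ⟨y', -, -, hy⟩ := mem_pts.1 hqt
    rw [eq_coord_of_horiz_ne h hx.symm, eq_coord_of_horiz_ne h hy.symm]

lemma mem_ends_of_horiz_eq (h : s.horiz = t.horiz) (hd : Disjoint s.interior t.interior)
    (hs : p ∈ s.pts) (ht : p ∈ t.pts) : p ∈ s.ends := by
  obtain ⟨hst, x, hx₁, hx₂, hx₃, hx₄, rfl⟩ := exists_param_of_horiz_eq h hs ht
  rw [point_mem_ends]
  rcases hi_le_lo_or_hi_le_lo hst hd with h | h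
  · right; linarith
  · left; linarith

lemma mem_pts_of_horiz_ne (h : s.horiz ≠ t.horiz) (htu : t.point = u.point)
    (hps : p ∈ s.pts) (hpt : p ∈ t.pts) (hqs : q ∈ s.pts) (hqu : q ∈ u.pts) : p ∈ u.pts := by
  obtain ⟨x, -, -, rfl⟩ := mem_pts.1 hps
  obtain ⟨y, -, -, rfl⟩ := mem_pts.1 hqs
  obtain ⟨x', -, -, hx⟩ := mem_pts.1 hpt
  obtain ⟨y', -, -, hy⟩ := mem_pts.1 hqu
  rw [← htu] at hy
  rwa [eq_coord_of_horiz_ne h hx.symm, ← eq_coord_of_horiz_ne h hy.symm]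

lemma exists_mem_pts_of_pairwise_inter (dst : Disjoint s.interior t.interior)
    (dsu : Disjoint s.interior u.interior) (dtu : Disjoint t.interior u.interior)
    (hst : ∃ p, p ∈ s.pts ∧ p ∈ t.pts) (hsu : ∃ p, p ∈ s.pts ∧ p ∈ u.pts)
    (htu : ∃ p, p ∈ t.pts ∧ p ∈ u.pts) : ∃ p, p ∈ s.pts ∧ p ∈ t.pts ∧ p ∈ u.pts := by
  obtain ⟨p₁, h₁s, h₁t⟩ := hst
  obtain ⟨p₂, h₂s, h₂u⟩ := hsu
  obtain ⟨p₃, h₃t, h₃u⟩ := htu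
  by_cases hs_t : s.horiz = t.horiz <;> by_cases hs_u : s.horiz = u.horiz
  · exfalso
    obtain ⟨pst, x₁, _, _, _, _, -⟩ := exists_param_of_horiz_eq hs_t h₁s h₁t
    obtain ⟨psu, x₂, _, _, _, _, -⟩ := exists_param_of_horiz_eq hs_u h₂s h₂u
    obtain ⟨ptu, x₃, _, _, _, _, -⟩ := exists_param_of_horiz_eq (hs_t ▸ hs_u) h₃t h₃u
    rcases hi_le_lo_or_hi_le_lo pst dst with _ | _ <;>
      rcases hi_le_lo_or_hi_le_lo psu dsu with _ | _ <;>
      rcases hi_le_lo_or_hi_le_lo ptu dtu with _ | _ <;>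
      linarith [s.lo_lt_hi, t.lo_lt_hi, u.lo_lt_hi]
  · have hts := (exists_param_of_horiz_eq hs_t h₁s h₁t).1.symm
    exact ⟨p₃, mem_pts_of_horiz_ne (fun h => hs_u (hs_t.trans h.symm)) hts h₃u h₃t h₂u h₂s,
      h₃t, h₃u⟩
  · have hsu' := (exists_param_of_horiz_eq hs_u h₂s h₂u).1
    exact ⟨p₁, h₁s, h₁t, mem_pts_of_horiz_ne (Ne.symm hs_t) hsu' h₁t h₁s h₃t h₃u⟩
  · have htu' : t.point = u.point := by
      refine (exists_param_of_horiz_eq ?_ h₃t h₃u).1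
      revert hs_t hs_u
      cases s.horiz <;> cases t.horiz <;> cases u.horiz <;> decide
    exact ⟨p₁, h₁s, h₁t, mem_pts_of_horiz_ne hs_t htu' h₁s h₁t h₂s h₂u⟩

/-- The unit vector of direction `(horizontal?, increasing?)`. -/
def armVec : Bool × Bool → ℝ × ℝ
  | (true, true) => (1, 0)
  | (true, false) => (-1, 0)
  | (false, true) => (0, 1)
  | (false, false) => (0, -1)

def Arm (s : GridSeg) (p : ℝ × ℝ) (d : Bool × Bool) : Prop :=
  ∀ᶠ δ in 𝓝[>] (0 : ℝ), p + δ • armVec d ∈ s.interior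

open Classical in
noncomputable def arms (s : GridSeg) (p : ℝ × ℝ) : Finset (Bool × Bool) :=
  univ.filter (s.Arm p)

lemma mem_arms {d : Bool × Bool} : d ∈ s.arms p ↔ s.Arm p d := by
  simp [arms]

lemma disjoint_arms (hd : Disjoint s.interior t.interior) : Disjoint (s.arms p) (t.arms p) := by
  refine Finset.disjoint_left.2 fun d hs ht => ?_
  obtain ⟨δ, hδs, hδt⟩ := ((mem_arms.1 hs).and (mem_arms.1 ht)).exists
  exact Set.disjoint_left.1 hd hδs hδt

lemma arm_of_lt (hlo : (s.lo : ℝ) ≤ x) (hhi : x < s.hi) :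
    s.Arm (s.point x) (s.horiz, true) := by
  filter_upwards [Ioo_mem_nhdsGT (sub_pos.2 hhi)] with δ hδ
  have : s.point x + δ • armVec (s.horiz, true) = s.point (x + δ) := by
    unfold point; cases s.horiz <;> simp [armVec]
  rw [this, point_mem_interior]
  constructor <;> linarith [hδ.1, hδ.2]

lemma arm_of_gt (hlo : (s.lo : ℝ) < x) (hhi : x ≤ s.hi) :
    s.Arm (s.point x) (s.horiz, false) := by
  filter_upwards [Ioo_mem_nhdsGT (sub_pos.2 hlo)] with δ hδ
  have : s.point x + δ • armVec (s.horiz, false) = s.point (x - δ) := by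
    unfold point; cases s.horiz <;> simp [armVec, sub_eq_add_neg]
  rw [this, point_mem_interior]
  constructor <;> linarith [hδ.1, hδ.2]

lemma one_le_card_arms (hp : p ∈ s.pts) : 1 ≤ #(s.arms p) := by
  obtain ⟨x, hlo, hhi, rfl⟩ := mem_pts.1 hp
  rcases hhi.lt_or_eq with hhi | rfl
  · exact card_pos.2 ⟨_, mem_arms.2 (arm_of_lt hlo hhi)⟩
  · exact card_pos.2 ⟨_, mem_arms.2 (arm_of_gt s.lo_lt_hi le_rfl)⟩

lemma two_le_card_arms (hp : p ∈ s.pts) (he : p ∉ s.ends) : 2 ≤ #(s.arms p) := by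
  obtain ⟨x, hlo, hhi, rfl⟩ := mem_pts.1 hp
  rw [point_mem_ends, not_or] at he
  have h₁ := arm_of_lt hlo (lt_of_le_of_ne hhi he.2)
  have h₂ := arm_of_gt (lt_of_le_of_ne hlo (Ne.symm he.1)) hhi
  calc 2 = #{(s.horiz, true), (s.horiz, false)} := by simp
    _ ≤ #(s.arms (s.point x)) := card_le_card (by simp [insert_subset_iff, mem_arms, h₁, h₂])

end GridSeg

lemma Finset.disjoint_of_union_eq_univ_of_disjoint_image {α : Type*} [Fintype α]
    [DecidableEq α] {A B : Finset α} {σ : α → α} (hσ : σ.Injective) (hAB : A ∪ B = univ)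
    (h : Disjoint A (B.image σ)) : Disjoint A B := by
  have hle : #A + #B ≤ Fintype.card α := by
    rw [← card_image_of_injective B hσ, ← card_union_of_disjoint h]
    exact card_le_univ _
  have := card_union_add_card_inter A B
  rw [hAB, card_univ] at this
  rw [disjoint_iff_inter_eq_empty, ← card_eq_zero]
  omega

namespace Fin

open Fin.NatCast

lemma add_natCast_ne_self {k m : ℕ} [NeZero k] (i : Fin k) (hm₀ : 0 < m) (hm : m < k) :
    i + (m : Fin k) ≠ i := by
  intro h
  have : (m : Fin k) = 0 := by simpa using h
  exact absurd (Nat.le_of_dvd hm₀ (natCast_eq_zero.1 this)) (by omega)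

lemma add_one_ne_self {k : ℕ} [NeZero k] (i : Fin k) (hk : 2 ≤ k) : i + 1 ≠ i := by
  simpa using i.add_natCast_ne_self (m := 1) Nat.one_pos hk

lemma add_one_add_one_ne_self {k : ℕ} [NeZero k] (i : Fin k) (hk : 3 ≤ k) : i + 1 + 1 ≠ i := by
  have : i + 1 + 1 = i + ((2 : ℕ) : Fin k) := by grind
  exact this ▸ i.add_natCast_ne_self Nat.two_pos hk

lemma add_one_add_one_add_one_ne_self {k : ℕ} [NeZero k] (i : Fin k) (hk : 4 ≤ k) :
    i + 1 + 1 + 1 ≠ i := by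
  have : i + 1 + 1 + 1 = i + ((3 : ℕ) : Fin k) := by grind
  exact this ▸ i.add_natCast_ne_self (by norm_num) hk

lemma even_of_forall_add_one_ne {k : ℕ} [NeZero k] (b : Fin k → Bool)
    (h : ∀ i, b (i + 1) ≠ b i) : Even k := by
  have key : ∀ n : ℕ, b n = b 0 ↔ Even n := by
    intro n
    induction n with
    | zero => simp
    | succ n ih =>
      rw [Nat.cast_succ, Nat.even_add_one, ← ih]
      have := h n
      revert this
      cases b (n + 1) <;> cases b n <;> cases b 0 <;> decide
  simpa using key k

end Fin

namespace IsInducedCycle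

variable {V : Type*} {G : SimpleGraph V} {k : ℕ} [NeZero k] {c : Fin k → V}

lemma adj_add_one (hc : IsInducedCycle G c) (hk : 2 ≤ k) (i : Fin k) :
    G.Adj (c i) (c (i + 1)) :=
  (hc.2 _ _).2 ⟨(i.add_one_ne_self hk).symm, Or.inr rfl⟩

lemma not_adj_add_one_add_one (hc : IsInducedCycle G c) (hk : 4 ≤ k) (i : Fin k) :
    ¬ G.Adj (c i) (c (i + 1 + 1)) := by
  rw [hc.2]
  rintro ⟨-, h | h⟩
  · exact (i.add_one_add_one_add_one_ne_self hk) h.symm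
  · exact (i + 1).add_one_ne_self (by omega) h

end IsInducedCycle

namespace IsB0Rep
open GridSeg

variable {V : Type*} {G : SimpleGraph V} {f : V → GridSeg} {p : ℝ × ℝ} {u v w a b c : V}

lemma disjoint (hf : IsB0Rep G f) (h : v ≠ w) : Disjoint (f v).interior (f w).interior :=
  hf.1 v w h

lemma exists_mem_pts_of_adj (hf : IsB0Rep G f) (h : G.Adj v w) :
    ∃ p, p ∈ (f v).pts ∧ p ∈ (f w).pts := by
  obtain ⟨p, hv, hw, -⟩ := (hf.2 v w h.ne).1 h
  exact ⟨p, hv, hw⟩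

lemma adj_of_mem_ends (hf : IsB0Rep G f) (h : v ≠ w) (hv : p ∈ (f v).ends)
    (hw : p ∈ (f w).pts) : G.Adj v w :=
  (hf.2 v w h).2 ⟨p, ends_subset_pts _ hv, hw, Or.inl hv⟩

/-- Distinct segments through `p` leave it in distinct directions, of which there are four;
`W'` lists segments passing through `p`, which use two directions. -/
lemma card_add_card_le_four [DecidableEq V] (hf : IsB0Rep G f) {W W' : Finset V}
    (hW' : W' ⊆ W) (hp : ∀ w ∈ W, p ∈ (f w).pts) (he : ∀ w ∈ W', p ∉ (f w).ends) :
    #W + #W' ≤ 4 := by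
  have hdisj : (W : Set V).PairwiseDisjoint fun w => (f w).arms p :=
    fun v _ w _ h => disjoint_arms (hf.disjoint h)
  calc #W + #W' = ∑ _ ∈ W \ W', 1 + ∑ _ ∈ W', 2 := by
        rw [← card_sdiff_add_card_eq_card hW']; simp only [sum_const, smul_eq_mul]; ring
    _ ≤ ∑ w ∈ W \ W', #((f w).arms p) + ∑ w ∈ W', #((f w).arms p) := by
        gcongr with w hw w hw
        · exact one_le_card_arms (hp w (mem_sdiff.1 hw).1)
        · exact two_le_card_arms (hp w (hW' hw)) (he w hw)
    _ = #(W.biUnion fun w => (f w).arms p) := by rw [sum_sdiff hW', card_biUnion hdisj]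
    _ ≤ 4 := card_le_univ _

theorem exists_mem_ends_forall_mem_pts (hf : IsB0Rep G f) (hva : G.Adj v a) (hvb : G.Adj v b)
    (hvc : G.Adj v c) (hab : G.Adj a b) (hac : G.Adj a c) (hbc : G.Adj b c) :
    ∃ q ∈ (f v).ends, ∀ w, q ∈ (f w).pts → w = v ∨ w = a ∨ w = b ∨ w = c := by
  classical
  obtain ⟨q, hqv, hqa, hqb⟩ := exists_mem_pts_of_pairwise_inter (hf.disjoint hva.ne)
    (hf.disjoint hvb.ne) (hf.disjoint hab.ne) (hf.exists_mem_pts_of_adj hva)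
    (hf.exists_mem_pts_of_adj hvb) (hf.exists_mem_pts_of_adj hab)
  obtain ⟨q', hq'v, hq'a, hq'c⟩ := exists_mem_pts_of_pairwise_inter (hf.disjoint hva.ne)
    (hf.disjoint hvc.ne) (hf.disjoint hac.ne) (hf.exists_mem_pts_of_adj hva)
    (hf.exists_mem_pts_of_adj hvc) (hf.exists_mem_pts_of_adj hac)
  obtain rfl := eq_of_mem_pts_inter (hf.disjoint hva.ne) hqv hqa hq'v hq'a
  have hcard : #{v, a, b, c} = 4 := by
    simp [card_insert_of_notMem, hva.ne, hvb.ne, hvc.ne, hab.ne, hac.ne, hbc.ne]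
  have hq : ∀ w ∈ ({v, a, b, c} : Finset V), q ∈ (f w).pts := by
    simp [hqv, hqa, hqb, hq'c]
  refine ⟨q, ?_, fun w hw => ?_⟩
  · by_contra he
    have := hf.card_add_card_le_four (W' := {v}) (by simp) hq (by simpa)
    rw [hcard, card_singleton] at this
    omega
  · by_contra hne
    have hw' : w ∉ ({v, a, b, c} : Finset V) := by simpa using hne
    have := hf.card_add_card_le_four (p := q) (W := insert w {v, a, b, c}) (empty_subset _)
      (forall_mem_insert _ _ _ |>.2 ⟨hw, hq⟩) (by simp)
    rw [card_insert_of_notMem hw', hcard] at this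
    omega

/-- Segments of non-adjacent vertices can only cross at interior points of both, where
they use up all four directions. -/
lemma not_mem_pts_of_not_adj (hf : IsB0Rep G f) (huv : u ≠ v) (hvw : v ≠ w) (huw : u ≠ w)
    (hnadj : ¬ G.Adj u w) (hu : p ∈ (f u).pts) (hv : p ∈ (f v).pts) : p ∉ (f w).pts := by
  classical
  intro hw
  have hue : p ∉ (f u).ends := fun h => hnadj (hf.adj_of_mem_ends huw h hw)
  have hwe : p ∉ (f w).ends := fun h => hnadj (hf.adj_of_mem_ends huw.symm h hu).symm
  have := hf.card_add_card_le_four (p := p) (W := {u, v, w}) (W' := {u, w})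
    (by simp [insert_subset_iff]) (by simp [hu, hv, hw]) (by simp [hue, hwe])
  rw [card_insert_of_notMem (by simp [huv, huw]), card_pair hvw, card_pair huw] at this
  omega

theorem even_of_isInducedCycle {k : ℕ} {c : Fin k → V} (hf : IsB0Rep G f)
    (hc : IsInducedCycle G c) (hk : 4 ≤ k)
    (hend : ∀ i, ∃ p ∈ (f (c i)).ends, ∀ j ≠ i, p ∉ (f (c j)).pts) : Even k := by
  classical
  have : NeZero k := ⟨by omega⟩
  have hadj : ∀ i, G.Adj (c i) (c (i + 1)) := hc.adj_add_one (by omega)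
  have hsucc : ∀ i : Fin k, i + 1 ≠ i := fun i => i.add_one_ne_self (by omega)
  choose p hp hpriv using hend
  choose x hx hx' hxe using fun i => (hf.2 _ _ (hadj i).ne).1 (hadj i)
  have hshared : ∀ i, x i ∈ (f (c (i + 1))).ends → x (i + 1) ∉ (f (c (i + 1))).ends := by
    intro i h₁ h₂
    have hxp : p (i + 1) ≠ x i := fun h => hpriv (i + 1) i (hsucc i).symm (h ▸ hx i)
    have : x (i + 1) = x i := by
      refine (eq_or_eq_of_mem_ends (hp (i + 1)) h₁ hxp h₂).resolve_left fun h => ?_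
      exact hpriv (i + 1) (i + 1 + 1) (hsucc (i + 1)) (h ▸ hx' (i + 1))
    exact hf.not_mem_pts_of_not_adj (hadj i).ne (hadj (i + 1)).ne
      (hc.1.ne (i.add_one_add_one_ne_self (by omega)).symm) (hc.not_adj_add_one_add_one hk i)
      (hx i) (hx' i) (this ▸ hx' (i + 1))
  let A : Finset (Fin k) := {i | x i ∈ (f (c i)).ends}
  let B : Finset (Fin k) := {i | x i ∈ (f (c (i + 1))).ends}
  -- `k` contacts, each using one of the `k` free endpoints, none of which serves two
  have hAB : Disjoint A B := by
    refine disjoint_of_union_eq_univ_of_disjoint_image (add_left_injective 1) ?_ ?_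
    · ext i
      simpa [A, B] using hxe i
    · refine disjoint_left.2 fun j hjA hjB => ?_
      obtain ⟨i, hiB, rfl⟩ := mem_image.1 hjB
      exact hshared i (mem_filter.1 hiB).2 (mem_filter.1 hjA).2
  refine Fin.even_of_forall_add_one_ne (fun i => (f (c i)).horiz) fun i h => ?_
  have hd := hf.disjoint (hadj i).ne
  exact disjoint_left.1 hAB (by simpa [A] using mem_ends_of_horiz_eq h.symm hd (hx i) (hx' i))
    (by simpa [B] using mem_ends_of_horiz_eq h hd.symm (hx' i) (hx i))

end IsB0Rep

lemma isInducedCycle_inl_cycleWithTriangles (k : ℕ) (t : Fin k → ℕ) :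
    IsInducedCycle (cycleWithTriangles k t) Sum.inl :=
  ⟨Sum.inl_injective, fun _ _ => Iff.rfl⟩

/-- family `F₃`: an odd cycle `v_1 … v_k` (`k ≥ 5`) where every cycle
vertex carries one triangle complete to it (Type 1), triangles pairwise anticomplete,
is not contact B₀-VPG. -/
theorem F3_not_contactB0VPG (k : ℕ) (hk : 5 ≤ k) (hodd : Odd k) :
    ¬ ContactB0VPG (cycleWithTriangles k (fun _ => 1)) := by
  rintro ⟨f, hf⟩
  refine Nat.not_even_iff_odd.2 hodd (hf.even_of_isInducedCycle
    (isInducedCycle_inl_cycleWithTriangles k _) (by omega) fun i => ?_)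
  let T (a : Fin 3) : Fin k ⊕ Σ _ : Fin k, Fin 1 × Fin 3 := Sum.inr ⟨i, 0, a⟩
  obtain ⟨q, hq, hpriv⟩ := hf.exists_mem_ends_forall_mem_pts (v := Sum.inl i) (a := T 0)
    (b := T 1) (c := T 2) rfl rfl rfl ⟨rfl, rfl, by simp⟩ ⟨rfl, rfl, by simp⟩
    ⟨rfl, rfl, by simp⟩
  exact ⟨q, hq, fun j hj hqj => by simpa [T, hj] using hpriv _ hqj⟩
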